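/- arXiv:2007.05483 — 3 statements merged into one kernel-verified Lean document; each statement's English description precedes it below -/
import Mathlib

section
/- Let n ≥ 1 and m ≥ 0 be integers, let B̃ be an (n+m)×n integer matrix, and let B be its top n×n submatrix. Assume that the only u ∈ ℤⁿ with all entries nonnegative and B·u = 0 is u = 0. Work in the Laurent polynomial ring L = ℚ[x₁^{±1},…,x_{n+m}^{±1}], and let R ⊆ L be the subring ℚ[x_{n+1}^{±1},…,x_{n+m}^{±1}] of Laurent polynomials involving only the last m variables. Suppose (F_k)_{k∈K} is a family of elements of L such that for each index k there exist a vector g̃_k ∈ ℤ^{n+m} and a finitely supported function c_k from the set of vectors e ∈ ℤⁿ with nonnegative entries to ℚ, with c_k(0) ≠ 0, such that F_k = Σ_e c_k(e)·x^{B̃·e + g̃_k}, where x^f denotes the Laurent monomial with exponent vector f ∈ ℤ^{n+m} and B̃·e ∈ ℤ^{n+m} is the matrix–vector product. If the vectors obtained from the g̃_k by keeping only the first n coordinates are pairwise distinct, then the family (F_k)_{k∈K} is linearly independent over R: whenever λ_k ∈ R are almost all zero and Σ_k λ_k·F_k = 0 in L, then every λ_k = 0. -/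
/-!
Order `ℤⁿ` by `a ≤ b ↔ b - a ∈ B ℕⁿ`; the hypothesis on `B` makes this a partial order. Grade
Laurent polynomials by their first `n` exponents: the coefficients `λ_k ∈ R` have degree `0`, and
every term of `F_k` has degree `≥ g_k`, with `c_k(0) x^{g̃_k}` its only term of degree `g_k`. Pick
`k₀` with `λ_{k₀} ≠ 0` and `g_{k₀}` minimal. As the `g_k` are distinct, for any term `x^f` of
`λ_{k₀}` the coefficient of `x^{f + g̃_{k₀}}` in `∑ λ_k F_k` is `λ_{k₀}(f) c_{k₀}(0) ≠ 0`.
-/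

open Finset Matrix
open scoped AddMonoidAlgebra

def Matrix.nonnegCone {R τ κ : Type*} [Ring R] [PartialOrder R] [IsOrderedAddMonoid R]
    [Fintype κ] (B : Matrix τ κ R) (hB : ∀ u, 0 ≤ u → B *ᵥ u = 0 → u = 0) :
    AddGroupCone (τ → R) where
  carrier := {v | ∃ e, 0 ≤ e ∧ B *ᵥ e = v}
  zero_mem' := ⟨0, le_rfl, B.mulVec_zero⟩
  add_mem' := by
    rintro _ _ ⟨e, he, rfl⟩ ⟨e', he', rfl⟩
    exact ⟨e + e', add_nonneg he he', B.mulVec_add e e'⟩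
  eq_zero_of_mem_of_neg_mem' := by
    rintro _ ⟨e, he, rfl⟩ ⟨e', he', h⟩
    have hsum : e + e' = 0 := hB _ (add_nonneg he he') (by rw [B.mulVec_add, h, add_neg_cancel])
    have he0 : e = 0 := le_antisymm (by simpa [eq_neg_of_add_eq_zero_left hsum] using he') he
    rw [he0, B.mulVec_zero]

lemma AddGroupCone.exists_minimalFor {ι G : Type*} [AddCommGroup G] (C : AddGroupCone G)
    (f : ι → G) (s : Finset ι) (hs : s.Nonempty) :
    ∃ i ∈ s, ∀ j ∈ s, f i - f j ∈ C → f j = f i := by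
  let _ := PartialOrder.mkOfAddGroupCone C
  obtain ⟨i, his, hmin⟩ := s.exists_minimalFor f hs
  exact ⟨i, his, fun j hjs hji => le_antisymm hji (hmin hjs hji)⟩

namespace AddMonoidAlgebra

variable {k G H : Type*} [Semiring k] [AddCommGroup G] [AddCommGroup H] (π : G →+ H)

/-- For the partial order on `H` given by `C`, `x ^ g` is the unique term of `F` of least
`π`-degree. -/
structure IsLeadingExponent (C : AddGroupCone H) (F : k[G]) (g : G) : Prop where
  coeff_ne_zero : F.coeff g ≠ 0
  sub_mem : ∀ f ∈ F.coeff.support, π (f - g) ∈ C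
  eq_of_map_eq : ∀ f ∈ F.coeff.support, π f = π g → f = g

variable {π}

lemma exists_map_eq_of_coeff_mul_ne_zero {p q : k[G]} (hp : ∀ f ∈ p.coeff.support, π f = 0)
    {v : G} (hv : (p * q).coeff v ≠ 0) : ∃ f ∈ q.coeff.support, π f = π v := by
  classical
  obtain ⟨a, ha, b, hb, rfl⟩ :=
    Finset.mem_add.1 (support_coeff_mul_subset p q (Finsupp.mem_support_iff.2 hv))
  exact ⟨b, hb, by rw [map_add, hp a ha, zero_add]⟩

variable {C : AddGroupCone H} {F p : k[G]} {g : G}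

lemma IsLeadingExponent.sub_mem_of_coeff_mul_ne_zero (hF : IsLeadingExponent π C F g)
    (hp : ∀ f ∈ p.coeff.support, π f = 0) {v : G} (hv : (p * F).coeff v ≠ 0) :
    π v - π g ∈ C := by
  obtain ⟨f, hf, hfv⟩ := exists_map_eq_of_coeff_mul_ne_zero hp hv
  simpa [hfv] using hF.sub_mem f hf

lemma IsLeadingExponent.coeff_mul_of_map_eq (hF : IsLeadingExponent π C F g)
    (hp : ∀ f ∈ p.coeff.support, π f = 0) {v : G} (hv : π v = π g) :
    (p * F).coeff v = p.coeff (v - g) * F.coeff g := by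
  classical
  have hrest : (p * F.erase g).coeff v = 0 := by
    by_contra hne
    obtain ⟨f, hf, hfv⟩ := exists_map_eq_of_coeff_mul_ne_zero hp hne
    rw [coeff_erase, Finsupp.support_erase, Finset.mem_erase] at hf
    exact hf.1 (hF.eq_of_map_eq f hf.2 (hfv.trans hv))
  conv_lhs => rw [← single_add_erase g F]
  rw [mul_add, coeff_add, Finsupp.add_apply, hrest, add_zero, coeff_mul_single_apply,
    sub_eq_add_neg]

theorem eq_zero_of_sum_mul_eq_zero [NoZeroDivisors k] {K : Type*} {F p : K → k[G]} {g : K → G}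
    (hF : ∀ i, IsLeadingExponent π C (F i) (g i)) (hg : Function.Injective (π ∘ g))
    (hp : ∀ i, ∀ f ∈ (p i).coeff.support, π f = 0) {S : Finset K}
    (hsum : ∑ i ∈ S, p i * F i = 0) : ∀ i ∈ S, p i = 0 := by
  classical
  by_contra! ⟨i₁, hi₁S, hi₁⟩
  obtain ⟨i₀, hi₀, hmin⟩ := C.exists_minimalFor (π ∘ g) {i ∈ S | p i ≠ 0}
    ⟨i₁, mem_filter.2 ⟨hi₁S, hi₁⟩⟩
  obtain ⟨hi₀S, hpi₀⟩ := mem_filter.1 hi₀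
  obtain ⟨f₀, hf₀⟩ := Finsupp.support_nonempty_iff.2 ((coeff_injective.ne_iff' rfl).2 hpi₀)
  set v := f₀ + g i₀
  have hv : π v = π (g i₀) := by rw [map_add, hp i₀ f₀ hf₀, zero_add]
  have hothers : ∀ i ∈ S, i ≠ i₀ → (p i * F i).coeff v = 0 := by
    intro i hiS hi
    by_contra hcoeff
    have hpi : p i ≠ 0 := by rintro h; simp [h] at hcoeff
    have hmem := (hF i).sub_mem_of_coeff_mul_ne_zero (hp i) hcoeff
    rw [hv] at hmem
    exact hi (hg (hmin i (mem_filter.2 ⟨hiS, hpi⟩) hmem))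
  have hcoeff : (∑ i ∈ S, p i * F i).coeff v = (p i₀).coeff f₀ * (F i₀).coeff (g i₀) := by
    rw [coeff_sum, Finset.sum_apply', Finset.sum_eq_single_of_mem i₀ hi₀S hothers,
      (hF i₀).coeff_mul_of_map_eq (hp i₀) hv, add_sub_cancel_right]
  rw [hsum] at hcoeff
  exact mul_ne_zero (Finsupp.mem_support_iff.1 hf₀) (hF i₀).coeff_ne_zero hcoeff.symm

section CalderoChapoton

variable {R ι κ τ : Type*} [Ring R] [Fintype κ]
  {Bt : Matrix ι κ R} {g : ι → R} {c : (κ → R) →₀ k}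

variable (Bt g c) in
/-- The shape `∑ₑ c(e) x^(B̃ e + g)` of a Caldero–Chapoton function with coefficients. -/
noncomputable def ccPolynomial : k[ι → R] :=
  c.sum fun e q => single (Bt *ᵥ e + g) q

lemma exists_eq_of_mem_support_ccPolynomial {f : ι → R}
    (hf : f ∈ (ccPolynomial Bt g c).coeff.support) : ∃ e ∈ c.support, Bt *ᵥ e + g = f := by
  classical
  rw [ccPolynomial, coeff_finsuppSum] at hf
  obtain ⟨e, he, hf⟩ := Finset.mem_biUnion.1 (Finsupp.support_sum hf)
  exact ⟨e, he, (Finset.mem_singleton.1 (Finsupp.support_single_subset hf)).symm⟩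

lemma isLeadingExponent_ccPolynomial [PartialOrder R] [IsOrderedAddMonoid R] (σ : τ → ι)
    (hB : ∀ u, 0 ≤ u → Bt.submatrix σ id *ᵥ u = 0 → u = 0) (hc : ∀ e ∈ c.support, 0 ≤ e)
    (hc0 : c 0 ≠ 0) :
    IsLeadingExponent (LinearMap.funLeft R R σ).toAddMonoidHom
      ((Bt.submatrix σ id).nonnegCone hB) (ccPolynomial Bt g c) g := by
  have hπ : ∀ e, LinearMap.funLeft R R σ (Bt *ᵥ e) = Bt.submatrix σ id *ᵥ e := fun e => rfl
  have hzero : ∀ e ∈ c.support, LinearMap.funLeft R R σ (Bt *ᵥ e) = 0 → e = 0 :=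
    fun e he h => hB e (hc e he) (hπ e ▸ h)
  refine ⟨?_, ?_, ?_⟩
  · classical
    have hcoeff : (ccPolynomial Bt g c).coeff g = c 0 := by
      rw [ccPolynomial, coeff_finsuppSum, Finsupp.sum_apply, Finsupp.sum, sum_eq_single 0]
      · simp
      · intro e he he0
        rw [coeff_single, Finsupp.single_apply, if_neg]
        intro h
        exact he0 (hzero e he (by rw [add_eq_right.1 h, map_zero]))
      · intro h0
        rw [Finsupp.notMem_support_iff.1 h0, coeff_single, Finsupp.single_zero, Finsupp.zero_apply]
    rwa [hcoeff]
  · intro f hf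
    obtain ⟨e, he, rfl⟩ := exists_eq_of_mem_support_ccPolynomial hf
    exact ⟨e, hc e he, by simp [hπ]⟩
  · intro f hf hfg
    obtain ⟨e, he, rfl⟩ := exists_eq_of_mem_support_ccPolynomial hf
    rw [hzero e he (by simpa using hfg), mulVec_zero, zero_add]

end CalderoChapoton

end AddMonoidAlgebra

theorem CC_functions_linearly_independent_general
    (n m : ℕ)
    (Bt : Matrix (Fin (n + m)) (Fin n) ℤ)
    (hker : ∀ u : Fin n → ℤ, (∀ i, 0 ≤ u i) →
      (Matrix.submatrix Bt (Fin.castAdd m) id).mulVec u = 0 → u = 0)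
    (K : Type*)
    (F : K → AddMonoidAlgebra ℚ (Fin (n + m) → ℤ))
    (g : K → (Fin (n + m) → ℤ))
    (c : K → ((Fin n → ℤ) →₀ ℚ))
    (hcsupp : ∀ k : K, ∀ e : Fin n → ℤ, c k e ≠ 0 → ∀ i, 0 ≤ e i)
    (hc0 : ∀ k : K, c k 0 ≠ 0)
    (hF : ∀ k : K, F k = (c k).sum fun e q =>
      AddMonoidAlgebra.single (Bt.mulVec e + g k) q)
    (hg : ∀ k k' : K,
      (∀ i : Fin n, g k (Fin.castAdd m i) = g k' (Fin.castAdd m i)) → k = k')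
    (lam : K → AddMonoidAlgebra ℚ (Fin (n + m) → ℤ))
    (hlam : ∀ k : K, ∀ f : Fin (n + m) → ℤ, (lam k).coeff f ≠ 0 →
      ∀ i : Fin n, f (Fin.castAdd m i) = 0)
    (S : Finset K)
    (hsum : ∑ k ∈ S, lam k * F k = 0) :
    ∀ k ∈ S, lam k = 0 := by
  have hF' (k : K) : F k = AddMonoidAlgebra.ccPolynomial Bt (g k) (c k) := hF k
  have hleading (k : K) := hF' k ▸
    AddMonoidAlgebra.isLeadingExponent_ccPolynomial (Fin.castAdd m) hker
      (fun e he => hcsupp k e (Finsupp.mem_support_iff.1 he)) (hc0 k)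
  refine AddMonoidAlgebra.eq_zero_of_sum_mul_eq_zero hleading
    (fun k k' h => hg k k' (congrFun h)) ?_ hsum
  exact fun k f hf => funext (hlam k f (Finsupp.mem_support_iff.1 hf))

/-- Linear independence over the coefficient ring of Laurent-polynomial families of
Caldero–Chapoton type: if `Ker B ∩ ℤⁿ₊ = 0` and the truncated `g`-vectors are pairwise
distinct, then the functions `F_k = Σ_e c_k(e) x^{B̃ e + g̃_k}` are linearly independent
over the Laurent polynomials in the last `m` variables. -/
theorem CC_functions_linearly_independent
    (n m : ℕ) (hn : 1 ≤ n)
    (Bt : Matrix (Fin (n + m)) (Fin n) ℤ)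
    (hker : ∀ u : Fin n → ℤ, (∀ i, 0 ≤ u i) →
      (Matrix.submatrix Bt (Fin.castAdd m) id).mulVec u = 0 → u = 0)
    (K : Type*)
    (F : K → AddMonoidAlgebra ℚ (Fin (n + m) → ℤ))
    (g : K → (Fin (n + m) → ℤ))
    (c : K → ((Fin n → ℤ) →₀ ℚ))
    (hcsupp : ∀ k : K, ∀ e : Fin n → ℤ, c k e ≠ 0 → ∀ i, 0 ≤ e i)
    (hc0 : ∀ k : K, c k 0 ≠ 0)
    (hF : ∀ k : K, F k = (c k).sum fun e q =>
      AddMonoidAlgebra.single (Bt.mulVec e + g k) q)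
    (hg : ∀ k k' : K,
      (∀ i : Fin n, g k (Fin.castAdd m i) = g k' (Fin.castAdd m i)) → k = k')
    (lam : K → AddMonoidAlgebra ℚ (Fin (n + m) → ℤ))
    (hlam : ∀ k : K, ∀ f : Fin (n + m) → ℤ, (lam k).coeff f ≠ 0 →
      ∀ i : Fin n, f (Fin.castAdd m i) = 0)
    (S : Finset K)
    (hsum : ∑ k ∈ S, lam k * F k = 0) :
    ∀ k ∈ S, lam k = 0 :=
  CC_functions_linearly_independent_general n m Bt hker K F g c hcsupp hc0 hF hg lam hlam S hsum
end

section
/- Let Q be a finite loop-free quiver with a gentle system of relations R that is cyclically closed. Let β₁,…,β_{m−1} (with m ≥ 2) be arrows forming a path, i.e., t(β_i) = s(β_{i+1}) for 1 ≤ i ≤ m−2, with (β_i, β_{i+1}) ∉ R for 1 ≤ i ≤ m−2, and let β_m be an arrow with β_m ∉ {β₁, β_{m−1}}, s(β_m) = s(β₁) and t(β_m) = t(β_{m−1}) (so β₁,…,β_m form a bypass). Set j_k := s(β_k) for 1 ≤ k ≤ m−1 and j_m := t(β_{m−1}), and let b_j denote the j-th column of the signed adjacency matrix B of Q and e_j ∈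 ℤ^{Q₀} the j-th standard basis vector. Then Σ_{k=1}^{m} b_{j_k} = 2·(e_{j_m} − e_{j_1}) in ℤ^{Q₀}. -/
/-!
Split the arrows at each vertex `j_k` of the bypass into the bypass arrows themselves and the
rest. By gentleness, every other arrow leaving `j_k` is the `R`-successor `γ` of the bypass arrow
entering `j_k`, and every other arrow entering `j_k` is the `R`-predecessor `δ` of the bypass arrow
leaving it. Cyclic closedness completes each relation `(α, γ)` to a 3-cycle `α γ δ`, and the far
vertex `w` of that 3-cycle is counted once among the heads of the out-arrows (as `t γ`) and once
among the tails of the in-arrows (as `s δ`), so these contributions cancel. What remains is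
`∑ (e_{t β_l} - e_{s β_l})`, which telescopes along the path and the bypass arrow to
`2 (e_{j_m} - e_{j_1})`.
-/

open Finset

theorem Finset.sum_Icc_one_add_two {M : Type*} [AddCommMonoid M] (f : ℕ → M) (n : ℕ) :
    ∑ k ∈ Icc 1 (n + 2), f k = f 1 + ∑ i ∈ range n, f (i + 2) + f (n + 2) := by
  induction n with
  | zero => simp [show Icc 1 2 = {1, 2} from rfl]
  | succ n ih =>
    rw [sum_Icc_succ_top (by omega), ih, sum_range_succ]
    abel

section

variable {V E : Type*}

structure IsGentle (s t : E → V) (R : E → E → Prop) : Prop where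
  target_eq_source : ∀ a b, R a b → t a = s b
  ncard_source_le_two : ∀ v, {a | s a = v}.ncard ≤ 2
  ncard_target_le_two : ∀ v, {a | t a = v}.ncard ≤ 2
  xor_of_source_eq : ∀ α β₁ β₂, β₁ ≠ β₂ → s β₁ = t α → s β₂ = t α → Xor (R α β₁) (R α β₂)
  xor_of_target_eq : ∀ α₁ α₂ β, α₁ ≠ α₂ → t α₁ = s β → t α₂ = s β → Xor (R α₁ β) (R α₂ β)

def IsCyclicallyClosed (s t : E → V) (R : E → E → Prop) : Prop :=
  ∀ α β, R α β → ∃ γ, s γ = t β ∧ t γ = s α ∧ R β γ ∧ R γ α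

noncomputable def signedAdjMatrix (s t : E → V) : Matrix V V ℤ :=
  Matrix.of fun i j => ({a | s a = j ∧ t a = i}.ncard : ℤ) - ({a | s a = i ∧ t a = j}.ncard : ℤ)

/-- `e_w` when `α : u ⟶ v` lies on a 3-cycle `α, γ : v ⟶ w, δ : w ⟶ u` with `R α γ`, and `0` when
no `γ` with `R α γ` exists. -/
def apex [Fintype E] [DecidableEq V] (t : E → V) (R : E → E → Prop) [DecidableRel R] (α : E) :
    V → ℤ :=
  ∑ γ ∈ univ.filter (R α ·), Pi.single (t γ) 1

variable {s t : E → V} {R : E → E → Prop}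

theorem signedAdjMatrix_col [Fintype E] [DecidableEq V] (j : V) :
    (fun i => signedAdjMatrix s t i j) =
      ∑ a ∈ univ.filter (s · = j), Pi.single (t a) 1 -
        ∑ a ∈ univ.filter (t · = j), Pi.single (s a) 1 := by
  ext i
  simp [signedAdjMatrix, Finset.sum_apply, Pi.single_apply, Set.ncard_eq_toFinset_card',
    filter_filter, @eq_comm _ i, and_comm]

namespace IsGentle

theorem reverse (hR : IsGentle s t R) : IsGentle t s (fun a b => R b a) where
  target_eq_source a b h := (hR.target_eq_source b a h).symm
  ncard_source_le_two := hR.ncard_target_le_two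
  ncard_target_le_two := hR.ncard_source_le_two
  xor_of_source_eq α β₁ β₂ := hR.xor_of_target_eq β₁ β₂ α
  xor_of_target_eq α₁ α₂ β := hR.xor_of_source_eq β α₁ α₂

theorem rel_right_unique (hR : IsGentle s t R) {α γ γ' : E} (h : R α γ) (h' : R α γ') :
    γ = γ' := by
  by_contra hne
  have := hR.xor_of_source_eq α γ γ' hne (hR.target_eq_source α γ h).symm
    (hR.target_eq_source α γ' h').symm
  rw [xor_def] at this
  tauto

theorem rel_left_unique (hR : IsGentle s t R) {δ δ' α : E} (h : R δ α) (h' : R δ' α) :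
    δ = δ' :=
  hR.reverse.rel_right_unique h h'

variable [Fintype E]

theorem filter_source_eq_pair [DecidableEq V] [DecidableEq E] (hR : IsGentle s t R) {a b : E}
    (hab : a ≠ b) (hs : s a = s b) :
    univ.filter (fun γ => s γ = s a) = {a, b} := by
  symm
  refine eq_of_subset_of_card_le (by simp [subset_iff, hs]) ?_
  rw [card_pair hab, ← Set.toFinset_ofPred, ← Set.ncard_eq_toFinset_card']
  exact hR.ncard_source_le_two (s a)

theorem filter_source_eq_insert [DecidableEq V] [DecidableEq E] [DecidableRel R]
    (hR : IsGentle s t R) {α β : E} (h : t α = s β) (hn : ¬R α β) :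
    univ.filter (fun γ => s γ = t α) = insert β (univ.filter (R α ·)) := by
  ext γ
  simp only [mem_filter, mem_univ, true_and, mem_insert]
  constructor
  · intro hγ
    by_cases hγβ : γ = β
    · exact Or.inl hγβ
    · have := hR.xor_of_source_eq α β γ (Ne.symm hγβ) h.symm hγ
      rw [xor_def] at this
      tauto
  · rintro (rfl | hγ)
    · exact h.symm
    · exact (hR.target_eq_source α γ hγ).symm

theorem filter_source_eq_union [DecidableEq V] [DecidableEq E] [DecidableRel R]
    (hR : IsGentle s t R) {α α' : E} (hne : α ≠ α') (ht : t α = t α') :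
    univ.filter (fun γ => s γ = t α) = univ.filter (R α ·) ∪ univ.filter (R α' ·) := by
  ext γ
  simp only [mem_filter, mem_univ, true_and, mem_union]
  constructor
  · intro hγ
    exact (hR.xor_of_target_eq α α' γ hne hγ.symm (ht ▸ hγ.symm)).or
  · rintro (hγ | hγ)
    · exact (hR.target_eq_source α γ hγ).symm
    · exact ht ▸ (hR.target_eq_source α' γ hγ).symm

theorem disjoint_filter_rel [DecidableRel R] (hR : IsGentle s t R) {α α' : E} (hne : α ≠ α')
    (ht : t α = t α') :
    Disjoint (univ.filter (R α ·)) (univ.filter (R α' ·)) := by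
  refine disjoint_filter.2 fun γ _ hγ hγ' => ?_
  have := hR.xor_of_target_eq α α' γ hne (hR.target_eq_source α γ hγ)
    (ht ▸ hR.target_eq_source α γ hγ)
  rw [xor_def] at this
  tauto

theorem apex_eq [DecidableEq V] [DecidableRel R] (hR : IsGentle s t R)
    (hC : IsCyclicallyClosed s t R) (α : E) :
    apex t R α = ∑ δ ∈ univ.filter (R · α), Pi.single (s δ) 1 := by
  by_cases h : ∃ γ, R α γ
  · obtain ⟨γ, hγ⟩ := h
    obtain ⟨δ, hδ, -, -, hδα⟩ := hC α γ hγ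
    have hout : univ.filter (R α ·) = {γ} := by
      ext γ'
      simpa using ⟨fun h => hR.rel_right_unique h hγ, fun h => h ▸ hγ⟩
    have hin : univ.filter (R · α) = {δ} := by
      ext δ'
      simpa using ⟨fun h => hR.rel_left_unique h hδα, fun h => h ▸ hδα⟩
    simp [apex, hout, hin, hδ]
  · push Not at h
    have hin : univ.filter (R · α) = ∅ := by
      refine filter_eq_empty_iff.2 fun δ _ hδ => ?_
      obtain ⟨γ, -, -, hγ, -⟩ := hC δ α hδ
      exact h γ hγ
    simp [apex, hin, h]

variable [DecidableEq V] [DecidableRel R]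

theorem signedAdjMatrix_col_source (hR : IsGentle s t R) (hC : IsCyclicallyClosed s t R)
    {α α' : E} (hne : α ≠ α') (hs : s α = s α') :
    (fun i => signedAdjMatrix s t i (s α)) =
      Pi.single (t α) 1 + Pi.single (t α') 1 - (apex t R α + apex t R α') := by
  classical
  rw [signedAdjMatrix_col, hR.filter_source_eq_pair hne hs, sum_pair hne,
    hR.reverse.filter_source_eq_union hne hs,
    sum_union (hR.reverse.disjoint_filter_rel hne hs), hR.apex_eq hC, hR.apex_eq hC]

theorem signedAdjMatrix_col_target (hR : IsGentle s t R) {α α' : E} (hne : α ≠ α')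
    (ht : t α = t α') :
    (fun i => signedAdjMatrix s t i (t α)) =
      apex t R α + apex t R α' - (Pi.single (s α) 1 + Pi.single (s α') 1) := by
  classical
  rw [signedAdjMatrix_col, hR.filter_source_eq_union hne ht,
    sum_union (hR.disjoint_filter_rel hne ht), hR.reverse.filter_source_eq_pair hne ht,
    sum_pair hne, apex, apex]

theorem signedAdjMatrix_col_of_not_rel (hR : IsGentle s t R) (hC : IsCyclicallyClosed s t R)
    {α β : E} (h : t α = s β) (hn : ¬R α β) :
    (fun i => signedAdjMatrix s t i (s β)) =
      Pi.single (t β) 1 + apex t R α - (Pi.single (s α) 1 + apex t R β) := by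
  classical
  have hout := hR.filter_source_eq_insert h hn
  have hin := hR.reverse.filter_source_eq_insert h.symm hn
  rw [h] at hout
  rw [signedAdjMatrix_col, hout, hin, sum_insert (by simpa using hn),
    sum_insert (by simpa using hn), hR.apex_eq hC β, apex]

end IsGentle

end

theorem gentle_QP_bypass_column_identity_general
    (V E : Type*) [DecidableEq V] [Fintype E]
    (s t : E → V)
    (R : E → E → Prop)
    (hRcomp : ∀ a b : E, R a b → t a = s b)
    (hG1s : ∀ v : V, {a : E | s a = v}.ncard ≤ 2)
    (hG1t : ∀ v : V, {a : E | t a = v}.ncard ≤ 2)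
    (hG2 : ∀ α β₁ β₂ : E, β₁ ≠ β₂ → s β₁ = t α → s β₂ = t α → Xor' (R α β₁) (R α β₂))
    (hG3 : ∀ α₁ α₂ β : E, α₁ ≠ α₂ → t α₁ = s β → t α₂ = s β → Xor' (R α₁ β) (R α₂ β))
    (hcyc : ∀ α β : E, R α β → ∃ γ : E, s γ = t β ∧ t γ = s α ∧ R β γ ∧ R γ α)
    (m : ℕ) (hm : 2 ≤ m) (β : ℕ → E)
    (hpath : ∀ i, 1 ≤ i → i ≤ m - 2 → t (β i) = s (β (i + 1)))
    (hnoR : ∀ i, 1 ≤ i → i ≤ m - 2 → ¬ R (β i) (β (i + 1)))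
    (hne1 : β m ≠ β 1) (hne2 : β m ≠ β (m - 1))
    (hsm : s (β m) = s (β 1)) (htm : t (β m) = t (β (m - 1))) :
    (∑ k ∈ Finset.Icc 1 m, (fun i : V =>
        (({a : E | s a = (if k = m then t (β (m - 1)) else s (β k)) ∧ t a = i}.ncard : ℤ) -
         ({a : E | s a = i ∧ t a = (if k = m then t (β (m - 1)) else s (β k))}.ncard : ℤ))))
      = 2 • (Pi.single (t (β (m - 1))) (1 : ℤ) - Pi.single (s (β 1)) 1) := by
  classical
  have hR : IsGentle s t R := ⟨hRcomp, hG1s, hG1t, hG2, hG3⟩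
  obtain ⟨n, rfl⟩ : ∃ n, m = n + 2 := ⟨m - 2, by omega⟩
  rw [show n + 2 - 1 = n + 1 from rfl] at hne2 htm ⊢
  change ∑ k ∈ Icc 1 (n + 2), (fun i => signedAdjMatrix s t i
    (if k = n + 2 then t (β (n + 1)) else s (β k))) = _
  set G : ℕ → V → ℤ := fun i =>
    Pi.single (t (β (i + 1))) 1 + Pi.single (s (β (i + 1))) 1 - apex t R (β (i + 1))
  have hmid : ∀ i ∈ range n, (fun j => signedAdjMatrix s t j
      (if i + 2 = n + 2 then t (β (n + 1)) else s (β (i + 2)))) = G (i + 1) - G i := by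
    intro i hi
    have hlt : i < n := mem_range.1 hi
    have hstep : t (β (i + 1)) = s (β (i + 2)) := hpath (i + 1) (by omega) (by omega)
    rw [if_neg (by omega), hR.signedAdjMatrix_col_of_not_rel hcyc hstep
      (hnoR (i + 1) (by omega) (by omega))]
    simp only [G, hstep]
    abel
  rw [Finset.sum_Icc_one_add_two, sum_congr rfl hmid, sum_range_sub, if_neg (by omega), if_pos rfl,
    hR.signedAdjMatrix_col_source hcyc hne1.symm hsm.symm,
    hR.signedAdjMatrix_col_target hne2.symm htm.symm]
  simp only [G, htm, hsm]
  abel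

/-- Bypass column identity for gentle quivers with potential: if `β₁ ⋯ β_{m-1}` is a path
avoiding the relations and `β_m` is a bypass arrow, then the columns of the signed
adjacency matrix at the vertices `j₁ = s(β₁), …, j_{m-1} = s(β_{m-1}), j_m = t(β_{m-1})`
sum to `2(e_{j_m} - e_{j_1})`. -/
theorem gentle_QP_bypass_column_identity
    (V E : Type*) [DecidableEq V] [Fintype E]
    (s t : E → V)
    (hloop : ∀ a : E, s a ≠ t a)
    (R : E → E → Prop)
    (hRcomp : ∀ a b : E, R a b → t a = s b)
    (hG1s : ∀ v : V, {a : E | s a = v}.ncard ≤ 2)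
    (hG1t : ∀ v : V, {a : E | t a = v}.ncard ≤ 2)
    (hG2 : ∀ α β₁ β₂ : E, β₁ ≠ β₂ → s β₁ = t α → s β₂ = t α → Xor' (R α β₁) (R α β₂))
    (hG3 : ∀ α₁ α₂ β : E, α₁ ≠ α₂ → t α₁ = s β → t α₂ = s β → Xor' (R α₁ β) (R α₂ β))
    (hcyc : ∀ α β : E, R α β → ∃ γ : E, s γ = t β ∧ t γ = s α ∧ R β γ ∧ R γ α)
    (m : ℕ) (hm : 2 ≤ m) (β : ℕ → E)
    (hpath : ∀ i, 1 ≤ i → i ≤ m - 2 → t (β i) = s (β (i + 1)))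
    (hnoR : ∀ i, 1 ≤ i → i ≤ m - 2 → ¬ R (β i) (β (i + 1)))
    (hne1 : β m ≠ β 1) (hne2 : β m ≠ β (m - 1))
    (hsm : s (β m) = s (β 1)) (htm : t (β m) = t (β (m - 1))) :
    (∑ k ∈ Finset.Icc 1 m, (fun i : V =>
        (({a : E | s a = (if k = m then t (β (m - 1)) else s (β k)) ∧ t a = i}.ncard : ℤ) -
         ({a : E | s a = i ∧ t a = (if k = m then t (β (m - 1)) else s (β k))}.ncard : ℤ))))
      = 2 • (Pi.single (t (β (m - 1))) (1 : ℤ) - Pi.single (s (β 1)) 1) :=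
  gentle_QP_bypass_column_identity_general V E s t R hRcomp hG1s hG1t hG2 hG3 hcyc m hm β hpath hnoR
    hne1 hne2 hsm htm
end

section
/- Define Fomin–Zelevinsky matrix mutation as follows: for a skew-symmetric matrix B ∈ ℤ^{n×n} and an index k ∈ {1,…,n}, μ_k(B) is the n×n integer matrix whose (i,j)-entry equals −B_{ij} if i = k or j = k, and equals B_{ij} + (|B_{ik}|·B_{kj} + B_{ik}·|B_{kj}|)/2 otherwise. Let B₀ be the 3×3 integer matrix with rows (0, 2, −2), (−2, 0, 2), (2, −2, 0) (the matrix of any triangulation of the once-punctured torus). Then for every finite sequence of indices k₁,…,k_ℓ ∈ {1,2,3}, the matrix B' = μ_{k_ℓ}(⋯(μ_{k₁}(B₀))⋯) satisfies B'·(1,1,1)ᵀ = 0; in particular Ker(B') ∩ ℤ³_{≥0} ≠ {0}, so no matrix mutation-equivalent to B₀ satisfies Ker(B) ∩ ℤ³_{≥0} = {0}. -/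
/-!
Mutating the once-punctured torus matrix `B₀` in any direction gives `-B₀`, and mutation
commutes with negation, so every matrix in the mutation class is `±B₀`. Each row of `B₀` sums
to zero, so the all-ones vector lies in the kernel of all of them.
-/

/-- Fomin–Zelevinsky matrix mutation in direction `k`. -/
def fzMut {n : ℕ} (B : Matrix (Fin n) (Fin n) ℤ) (k : Fin n) : Matrix (Fin n) (Fin n) ℤ :=
  fun i j =>
    if i = k ∨ j = k then -B i j
    else B i j + (|B i k| * B k j + B i k * |B k j|) / 2

/-- The exchange matrix of any triangulation of the once-punctured torus. -/
def onceTorusMatrix : Matrix (Fin 3) (Fin 3) ℤ := !![0, 2, -2; -2, 0, 2; 2, -2, 0]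

theorem Int.even_abs_mul_add_mul_abs (a b : ℤ) : Even (|a| * b + a * |b|) := by
  rcases abs_cases a with ⟨ha, _⟩ | ⟨ha, _⟩ <;> rcases abs_cases b with ⟨hb, _⟩ | ⟨hb, _⟩ <;>
    rw [ha, hb] <;> simp [parity_simps]

-- Evenness matters: `ℤ`-division rounds down, so `(-x) / 2 ≠ -(x / 2)` for odd `x`.
theorem fzMut_neg {n : ℕ} (B : Matrix (Fin n) (Fin n) ℤ) (k : Fin n) :
    fzMut (-B) k = -fzMut B k := by
  ext i j
  have hdvd : (2 : ℤ) ∣ |B i k| * B k j + B i k * |B k j| :=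
    even_iff_two_dvd.mp (Int.even_abs_mul_add_mul_abs _ _)
  by_cases hk : i = k ∨ j = k
  · simp [fzMut, hk]
  · simp only [fzMut, hk, if_false, Matrix.neg_apply, abs_neg]
    rw [show |B i k| * -B k j + -B i k * |B k j| = -(|B i k| * B k j + B i k * |B k j|) by ring,
      Int.neg_ediv_of_dvd hdvd, neg_add]

theorem foldl_fzMut_of_forall_fzMut_eq_neg {n : ℕ} (L : List (Fin n))
    {B : Matrix (Fin n) (Fin n) ℤ} (hB : ∀ k, fzMut B k = -B) :
    L.foldl fzMut B = (-1 : ℤ) ^ L.length • B := by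
  induction L generalizing B with
  | nil => simp
  | cons k L ih =>
    have hnegB : ∀ k, fzMut (-B) k = -(-B) := fun k => by rw [fzMut_neg, hB]
    rw [List.foldl_cons, hB, ih hnegB, List.length_cons, pow_succ, mul_smul, neg_one_smul]

theorem fzMut_onceTorusMatrix (k : Fin 3) : fzMut onceTorusMatrix k = -onceTorusMatrix := by
  revert k
  decide

theorem onceTorusMatrix_mulVec_one : onceTorusMatrix.mulVec 1 = 0 := by
  decide

theorem foldl_fzMut_onceTorusMatrix_mulVec_one (L : List (Fin 3)) :
    (L.foldl fzMut onceTorusMatrix).mulVec 1 = 0 := by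
  rw [foldl_fzMut_of_forall_fzMut_eq_neg L fzMut_onceTorusMatrix, Matrix.smul_mulVec,
    onceTorusMatrix_mulVec_one, smul_zero]

/-- Every matrix mutation-equivalent to the matrix of the once-punctured torus kills the
all-ones vector; in particular its kernel meets `ℤ³_{≥0}` nontrivially, so no matrix in
this mutation class satisfies `Ker(B) ∩ ℤ³_{≥0} = {0}`. -/
theorem once_punctured_torus_mutation_class_kernel :
    ∀ L : List (Fin 3),
      (L.foldl fzMut (!![0, 2, -2; -2, 0, 2; 2, -2, 0] : Matrix (Fin 3) (Fin 3) ℤ)).mulVec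
          (fun _ => 1) = 0 ∧
      (∃ u : Fin 3 → ℤ, (∀ i, 0 ≤ u i) ∧
        (L.foldl fzMut (!![0, 2, -2; -2, 0, 2; 2, -2, 0] : Matrix (Fin 3) (Fin 3) ℤ)).mulVec
          u = 0 ∧ u ≠ 0) := by
  intro L
  have hker := foldl_fzMut_onceTorusMatrix_mulVec_one L
  exact ⟨hker, 1, fun _ => zero_le_one, hker, one_ne_zero⟩
end
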